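/- arXiv:1809.08051 — 5 statements merged into one kernel-verified Lean document; each statement's English description precedes it below -/
import Mathlib

section
/- For every real number R that is not an integer, the sequence N ↦ (-1)^N C(R, N) is asymptotically equivalent, as the natural number N tends to infinity, to N ↦ -(sin(πR)/π) · Γ(R+1) · N^{-R-1}; that is, the ratio of the two sides tends to 1. -/
/-! Euler's limit formula `Γ(s) = lim N^s N! / (s (s+1) ⋯ (s+N))` at `s = -R` says that
`(-1)^N C(R,N) N^(R+1) → 1 / Γ(-R)`, because `(-1)^N C(R,N) = (-R)(1-R) ⋯ (N-1-R) / N!`.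
The reflection formula `Γ(-R) Γ(1+R) = -π / sin(πR)` identifies `1 / Γ(-R)` with the constant
`-(sin(πR)/π) Γ(R+1)`. -/

open Finset Filter Real

/-- Generalized binomial coefficient C(R,k) = R(R-1)⋯(R-k+1)/k! for real R and natural k. -/
noncomputable def genBinom (R : ℝ) (k : ℕ) : ℝ :=
  (∏ i ∈ Finset.range k, (R - i)) / (Nat.factorial k)

open scoped Nat Topology

theorem neg_one_pow_mul_genBinom (R : ℝ) (N : ℕ) :
    (-1 : ℝ) ^ N * genBinom R N = (∏ j ∈ range N, ((j : ℝ) - R)) / N ! := by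
  have hsign : ∏ j ∈ range N, ((j : ℝ) - R) = ∏ j ∈ range N, (-1 : ℝ) * (R - j) :=
    prod_congr rfl fun j _ => by ring
  rw [hsign, prod_mul_distrib, prod_const, card_range, genBinom, mul_div_assoc]

theorem inv_GammaSeq_neg (R : ℝ) (N : ℕ) :
    (GammaSeq (-R) N)⁻¹ = (-1 : ℝ) ^ N * genBinom R N * (N : ℝ) ^ R * (N - R) := by
  rw [neg_one_pow_mul_genBinom, GammaSeq, prod_range_succ, rpow_neg (Nat.cast_nonneg N)]
  simp only [neg_add_eq_sub]
  field_simp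

theorem Gamma_neg_ne_zero {R : ℝ} (hR : ∀ m : ℕ, R ≠ m) : Gamma (-R) ≠ 0 :=
  Gamma_ne_zero fun m h => hR m (neg_inj.mp h)

theorem tendsto_neg_one_pow_mul_genBinom_mul_rpow {R : ℝ} (hR : ∀ m : ℕ, R ≠ m) :
    Tendsto (fun N : ℕ => (-1 : ℝ) ^ N * genBinom R N * (N : ℝ) ^ (R + 1)) atTop
      (𝓝 (Gamma (-R))⁻¹) := by
  -- the last factor `-R + N` of the product in `GammaSeq (-R) N` is compensated by `N / (N - R)`
  have hlim : Tendsto (fun N : ℕ => (GammaSeq (-R) N)⁻¹ * ((N : ℝ) / (N + -R))) atTop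
      (𝓝 ((Gamma (-R))⁻¹ * 1)) :=
    ((GammaSeq_tendsto_Gamma (-R)).inv₀ (Gamma_neg_ne_zero hR)).mul
      (tendsto_natCast_div_add_atTop (-R))
  rw [mul_one] at hlim
  refine hlim.congr' ?_
  filter_upwards [eventually_gt_atTop 0, eventually_gt_atTop ⌈R⌉₊] with N hN hNR
  have hNR' : (N : ℝ) - R ≠ 0 := sub_ne_zero.mpr (Nat.lt_of_ceil_lt hNR).ne'
  rw [inv_GammaSeq_neg, rpow_add_one (Nat.cast_pos.mpr hN).ne', ← sub_eq_add_neg]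
  field_simp

theorem neg_sin_div_pi_mul_Gamma_add_one {R : ℝ} (hR : ∀ n : ℤ, R ≠ n) :
    -(sin (π * R) / π) * Gamma (R + 1) = (Gamma (-R))⁻¹ := by
  have hsin : sin (π * R) ≠ 0 := fun h => by
    obtain ⟨n, hn⟩ := sin_eq_zero_iff.mp h
    exact hR n (mul_left_cancel₀ pi_ne_zero (by linarith)).symm
  have hrefl := Gamma_mul_Gamma_one_sub (-R)
  rw [sub_neg_eq_add, add_comm, mul_neg, sin_neg] at hrefl
  refine eq_inv_of_mul_eq_one_left ?_
  rw [mul_assoc, mul_comm (Gamma (R + 1)), hrefl]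
  field_simp

/-- For non-integer real R, as N → ∞,
    (-1)^N C(R,N) ∼ -(sin(πR)/π) Γ(R+1) N^{-R-1}: the ratio tends to 1. -/
theorem genBinom_asymptotic (R : ℝ) (hR : ∀ n : ℤ, R ≠ (n : ℝ)) :
    Filter.Tendsto
      (fun N : ℕ =>
        ((-1 : ℝ) ^ N * genBinom R N)
          / (-(Real.sin (Real.pi * R) / Real.pi) * Real.Gamma (R + 1) * (N : ℝ) ^ (-R - 1)))
      Filter.atTop (nhds 1) := by
  have hRnat : ∀ m : ℕ, R ≠ m := fun m => by exact_mod_cast hR m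
  have hlim := (tendsto_neg_one_pow_mul_genBinom_mul_rpow hRnat).mul_const (Gamma (-R))
  rw [inv_mul_cancel₀ (Gamma_neg_ne_zero hRnat)] at hlim
  refine hlim.congr' (Eventually.of_forall fun N => ?_)
  have hpow : (N : ℝ) ^ (-R - 1) = ((N : ℝ) ^ (R + 1))⁻¹ := by
    rw [← rpow_neg (Nat.cast_nonneg N), neg_add']
  dsimp only
  rw [neg_sin_div_pi_mul_Gamma_add_one hR, hpow, div_eq_mul_inv, mul_inv, inv_inv, inv_inv]
  ring
end

section
/- For every real number R that is not an integer and every natural number j, the sequence N ↦ ∑_{k=0}^{N} (-1)^k C(R,k) k^j is asymptotically equivalent, as N tends to infinity, to N ↦ (-1)^N · (R/(R-j)) · C(R-1, N) · N^j; that is, the ratio of the two sides tends to 1. -/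
/-!
Write `S_j(R, N) = ∑_{k ≤ N} (-1)^k C(R,k) k^j`. For `j = 0` Pascal's rule telescopes the sum to
`(-1)^N C(R-1, N)`. Since `k C(R,k) = R C(R-1,k-1)`, shifting the index and expanding `(k+1)^j`
binomially gives `S_{j+1}(R, N+1) = -R ∑_{i ≤ j} C(j,i) S_i(R-1, N)`, so by induction on `j`
(for all non-integral `R` at once) each `S_i(R-1, N)` is asymptotic to its main term; these main
terms have orders `N^i C(R-2, N)`, and only the top one `i = j` survives after division by the
main term of `S_{j+1}(R, N+1)`.
-/

open Finset Filter Real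

lemma sub_natCast_ne_zero_of_ne_intCast {R : ℝ} (hR : ∀ n : ℤ, R ≠ n) (m : ℕ) :
    R - m ≠ 0 :=
  sub_ne_zero.2 (by exact_mod_cast hR m)

lemma sub_one_ne_intCast_of_ne_intCast {R : ℝ} (hR : ∀ n : ℤ, R ≠ n) (n : ℤ) :
    R - 1 ≠ n := by
  intro h
  exact hR (n + 1) (by push_cast; linarith)

namespace genBinom

lemma ne_zero {R : ℝ} (hR : ∀ n : ℤ, R ≠ n) (k : ℕ) : genBinom R k ≠ 0 :=
  div_ne_zero (prod_ne_zero_iff.2 fun i _ => sub_natCast_ne_zero_of_ne_intCast hR i)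
    (Nat.cast_ne_zero.2 k.factorial_ne_zero)

lemma succ_mul (R : ℝ) (k : ℕ) : genBinom R (k + 1) * (k + 1) = genBinom R k * (R - k) := by
  have hk : (k : ℝ) + 1 ≠ 0 := by positivity
  have hf : (k.factorial : ℝ) ≠ 0 := Nat.cast_ne_zero.2 k.factorial_ne_zero
  simp only [genBinom, prod_range_succ, Nat.factorial_succ, Nat.cast_mul, Nat.cast_succ]
  field_simp

lemma succ_mul_eq_mul_sub_one (R : ℝ) (k : ℕ) :
    genBinom R (k + 1) * (k + 1) = R * genBinom (R - 1) k := by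
  have hk : (k : ℝ) + 1 ≠ 0 := by positivity
  have hf : (k.factorial : ℝ) ≠ 0 := Nat.cast_ne_zero.2 k.factorial_ne_zero
  have hprod : ∏ i ∈ range (k + 1), (R - i) = R * ∏ i ∈ range k, (R - 1 - i) := by
    rw [prod_range_succ', mul_comm]
    push_cast
    simp only [sub_zero, sub_sub, add_comm]
  simp only [genBinom, hprod, Nat.factorial_succ, Nat.cast_mul, Nat.cast_succ]
  field_simp

lemma succ_eq_sub_one_add (R : ℝ) (k : ℕ) :
    genBinom R (k + 1) = genBinom (R - 1) (k + 1) + genBinom (R - 1) k := by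
  have hk : (k : ℝ) + 1 ≠ 0 := by positivity
  apply mul_right_cancel₀ hk
  linear_combination succ_mul_eq_mul_sub_one R k - succ_mul (R - 1) k

lemma sum_range_succ_neg_one_pow_mul (R : ℝ) (N : ℕ) :
    ∑ k ∈ range (N + 1), (-1 : ℝ) ^ k * genBinom R k = (-1) ^ N * genBinom (R - 1) N := by
  induction N with
  | zero => simp [genBinom]
  | succ n ih =>
    rw [sum_range_succ, ih, succ_eq_sub_one_add]
    ring

end genBinom

noncomputable def altPowSum (R : ℝ) (j N : ℕ) : ℝ :=
  ∑ k ∈ range (N + 1), (-1 : ℝ) ^ k * genBinom R k * (k : ℝ) ^ j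

noncomputable def altPowSumMainTerm (R : ℝ) (j N : ℕ) : ℝ :=
  (-1 : ℝ) ^ N * (R / (R - j)) * genBinom (R - 1) N * (N : ℝ) ^ j

lemma altPowSum_zero (R : ℝ) (N : ℕ) : altPowSum R 0 N = (-1) ^ N * genBinom (R - 1) N := by
  simpa [altPowSum] using genBinom.sum_range_succ_neg_one_pow_mul R N

lemma altPowSum_succ_succ (R : ℝ) (j N : ℕ) :
    altPowSum R (j + 1) (N + 1) =
      -R * ∑ i ∈ range (j + 1), (j.choose i : ℝ) * altPowSum (R - 1) i N := by
  have hterm : ∀ k : ℕ,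
      (-1 : ℝ) ^ (k + 1) * genBinom R (k + 1) * ((k + 1 : ℕ) : ℝ) ^ (j + 1) =
      -R * ∑ i ∈ range (j + 1),
        (j.choose i : ℝ) * ((-1) ^ k * genBinom (R - 1) k * (k : ℝ) ^ i) := by
    intro k
    have hbinom : ∑ i ∈ range (j + 1),
        (j.choose i : ℝ) * ((-1) ^ k * genBinom (R - 1) k * (k : ℝ) ^ i) =
          (-1) ^ k * genBinom (R - 1) k * ((k : ℝ) + 1) ^ j := by
      rw [add_pow, mul_sum]
      exact sum_congr rfl fun i _ => by ring
    rw [hbinom, Nat.cast_succ]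
    linear_combination
      ((-1 : ℝ) ^ (k + 1) * ((k : ℝ) + 1) ^ j) * genBinom.succ_mul_eq_mul_sub_one R k
  rw [altPowSum, sum_range_succ']
  simp only [hterm, Nat.cast_zero, zero_pow j.succ_ne_zero, mul_zero, add_zero, ← mul_sum]
  rw [sum_comm]
  simp only [altPowSum, mul_sum]

lemma altPowSumMainTerm_ne_zero {R : ℝ} (hR : ∀ n : ℤ, R ≠ n) (j : ℕ) {N : ℕ}
    (hN : N ≠ 0) :
    altPowSumMainTerm R j N ≠ 0 := by
  have hR0 : R ≠ 0 := by simpa using sub_natCast_ne_zero_of_ne_intCast hR 0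
  unfold altPowSumMainTerm
  exact mul_ne_zero (mul_ne_zero (mul_ne_zero (by simp)
    (div_ne_zero hR0 (sub_natCast_ne_zero_of_ne_intCast hR j)))
    (genBinom.ne_zero (sub_one_ne_intCast_of_ne_intCast hR) N))
    (pow_ne_zero _ (Nat.cast_ne_zero.2 hN))

lemma tendsto_natCast_pow_div_add_one_pow {i j : ℕ} (hij : i ≤ j) :
    Tendsto (fun M : ℕ => (M : ℝ) ^ i / ((M : ℝ) + 1) ^ j) atTop
      (nhds (if i = j then 1 else 0)) := by
  have hlim : Tendsto (fun M : ℕ => ((M : ℝ) / (M + 1)) ^ i * (1 / ((M : ℝ) + 1)) ^ (j - i))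
      atTop (nhds ((1 : ℝ) ^ i * 0 ^ (j - i))) :=
    ((tendsto_natCast_div_add_atTop (1 : ℝ)).pow i).mul
      (tendsto_one_div_add_atTop_nhds_zero_nat.pow (j - i))
  have hlimit : (1 : ℝ) ^ i * 0 ^ (j - i) = if i = j then 1 else 0 := by
    rcases hij.eq_or_lt with rfl | hlt
    · simp
    · simp [hlt.ne, Nat.sub_ne_zero_of_lt hlt]
  rw [hlimit] at hlim
  refine hlim.congr fun M => ?_
  rw [div_pow, div_pow, one_pow, div_mul_div_comm, ← pow_add, Nat.add_sub_cancel' hij, mul_one]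

lemma tendsto_mul_altPowSumMainTerm_div {R : ℝ} (hR : ∀ n : ℤ, R ≠ n) {i j : ℕ}
    (hij : i ≤ j) :
    Tendsto (fun M : ℕ =>
        -R * altPowSumMainTerm (R - 1) i M / altPowSumMainTerm R (j + 1) (M + 1))
      atTop (nhds (if i = j then 1 else 0)) := by
  have hR0 : R ≠ 0 := by simpa using sub_natCast_ne_zero_of_ne_intCast hR 0
  have hR1 : R - 1 ≠ 0 := by simpa using sub_natCast_ne_zero_of_ne_intCast hR 1
  have hR1i : R - 1 - i ≠ 0 :=
    sub_natCast_ne_zero_of_ne_intCast (sub_one_ne_intCast_of_ne_intCast hR) i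
  have hRj : R - (j + 1 : ℕ) ≠ 0 := sub_natCast_ne_zero_of_ne_intCast hR (j + 1)
  have hratio : ∀ M : ℕ,
      -R * altPowSumMainTerm (R - 1) i M / altPowSumMainTerm R (j + 1) (M + 1) =
      (R - (j + 1 : ℕ)) / (R - 1 - i) * ((M : ℝ) ^ i / ((M : ℝ) + 1) ^ j) := by
    intro M
    have hM : (M : ℝ) + 1 ≠ 0 := by positivity
    have hC : genBinom (R - 1 - 1) M ≠ 0 := genBinom.ne_zero
      (sub_one_ne_intCast_of_ne_intCast (sub_one_ne_intCast_of_ne_intCast hR)) M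
    have hCsucc :
        genBinom (R - 1) (M + 1) = (R - 1) * genBinom (R - 1 - 1) M / (M + 1) := by
      rw [eq_div_iff hM, genBinom.succ_mul_eq_mul_sub_one]
    simp only [altPowSumMainTerm, hCsucc, pow_succ, Nat.cast_succ] at hRj ⊢
    field_simp
  refine (tendsto_congr hratio).2 ?_
  rcases hij.eq_or_lt with rfl | hlt
  · have hone : (R - (i + 1 : ℕ)) / (R - 1 - i) = 1 := by
      rw [div_eq_one_iff_eq hR1i]
      push_cast
      ring
    simpa only [hone, one_mul] using tendsto_natCast_pow_div_add_one_pow hij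
  · simpa [hlt.ne] using
      (tendsto_natCast_pow_div_add_one_pow hij).const_mul ((R - (j + 1 : ℕ)) / (R - 1 - i))

theorem tendsto_altPowSum_div_mainTerm (j : ℕ) {R : ℝ} (hR : ∀ n : ℤ, R ≠ n) :
    Tendsto (fun N : ℕ => altPowSum R j N / altPowSumMainTerm R j N) atTop (nhds 1) := by
  induction j using Nat.strong_induction_on generalizing R with
  | _ j ih =>
  rcases j with _ | j
  · refine tendsto_const_nhds.congr' ?_
    filter_upwards [eventually_ne_atTop 0] with N hN
    have hR0 : R ≠ 0 := by simpa using sub_natCast_ne_zero_of_ne_intCast hR 0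
    rw [eq_div_iff (altPowSumMainTerm_ne_zero hR 0 hN), altPowSum_zero, altPowSumMainTerm,
      Nat.cast_zero, sub_zero]
    field_simp
  · rw [← tendsto_add_atTop_iff_nat 1]
    have hsum : Tendsto (fun M : ℕ => ∑ i ∈ range (j + 1), (j.choose i : ℝ) *
        (altPowSum (R - 1) i M / altPowSumMainTerm (R - 1) i M) *
        (-R * altPowSumMainTerm (R - 1) i M / altPowSumMainTerm R (j + 1) (M + 1))) atTop
        (nhds (∑ i ∈ range (j + 1), (j.choose i : ℝ) * 1 * (if i = j then 1 else 0))) := by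
      refine tendsto_finsetSum _ fun i hi => ?_
      have hij : i ≤ j := Nat.lt_succ_iff.mp (mem_range.mp hi)
      exact (tendsto_const_nhds.mul (ih i (by omega) (sub_one_ne_intCast_of_ne_intCast hR))).mul
        (tendsto_mul_altPowSumMainTerm_div hR hij)
    simp only [mul_one, mul_ite, mul_zero, sum_ite_eq', mem_range, Nat.lt_succ_self, if_true,
      Nat.choose_self, Nat.cast_one] at hsum
    refine hsum.congr' ?_
    filter_upwards [eventually_ne_atTop 0] with M hM
    rw [altPowSum_succ_succ, mul_sum, sum_div]
    refine sum_congr rfl fun i _ => ?_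
    have hT := altPowSumMainTerm_ne_zero (sub_one_ne_intCast_of_ne_intCast hR) i hM
    field_simp

/-- For non-integer real R and natural j, as N → ∞,
    ∑_{k=0}^{N} (-1)^k C(R,k) k^j ∼ (-1)^N (R/(R-j)) C(R-1,N) N^j: the ratio tends to 1.
    (Here 0^0 = 1 by the convention of natural number powers.) -/
theorem alternating_sum_pow_asymptotic (R : ℝ) (hR : ∀ n : ℤ, R ≠ (n : ℝ)) (j : ℕ) :
    Filter.Tendsto
      (fun N : ℕ =>
        (∑ k ∈ Finset.range (N + 1), (-1 : ℝ) ^ k * genBinom R k * (k : ℝ) ^ j)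
          / ((-1 : ℝ) ^ N * (R / (R - j)) * genBinom (R - 1) N * (N : ℝ) ^ j))
      Filter.atTop (nhds 1) :=
  tendsto_altPowSum_div_mainTerm j hR
end

section
/- For every real number x > 0, the Grünwald–Letnikov half-derivative of f(x) = x evaluated along the coupled limit h = x/N converges to the Riemann–Liouville value: lim_{N→∞} (x/N)^{-1/2} ∑_{k=0}^{N} (-1)^k C(1/2, k) (x - k·x/N) = (2/√π) √x. -/
/-!
Pascal's rule telescopes the alternating partial sums:
`∑_{k ≤ N} (-1)^k C(R,k) = (-1)^N C(R-1,N)`.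
Since `x - k·x/N = (x/N)(N - k)`, the Grünwald–Letnikov sum of the identity is `x/N` times an
iterated partial sum, hence equals `(x/N)(-1)^(N-1) C(R-2,N-1)`. For `R = 1/2` this is
`2x·binom(2N,N)/4^N`, and Wallis' product gives `√N·binom(2N,N)/4^N → 1/√π`.
-/

open Finset Filter Real

open Topology
open Nat (centralBinom)

theorem Finset.sum_range_mul_sub_eq_sum_partial_sums {R : Type*} [CommRing R] (a : ℕ → R)
    (N : ℕ) :
    ∑ k ∈ range (N + 1), a k * ((N : R) - k) =
      ∑ m ∈ range N, ∑ k ∈ range (m + 1), a k := by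
  induction N with
  | zero => simp
  | succ N ih =>
    have hsplit :
        ∀ k ∈ range (N + 1), a k * ((N + 1 : ℕ) - k : R) = a k * ((N : R) - k) + a k :=
      fun k _ => by push_cast; ring
    rw [sum_range_succ, Nat.cast_succ, sub_self, mul_zero, add_zero, ← Nat.cast_succ,
      sum_congr rfl hsplit, sum_add_distrib, ih]
    exact (sum_range_succ _ N).symm

theorem genBinom_zero (R : ℝ) : genBinom R 0 = 1 := by
  simp [genBinom]

theorem genBinom_succ (R : ℝ) (k : ℕ) :
    genBinom R (k + 1) = genBinom R k * (R - k) / (k + 1) := by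
  rw [genBinom, genBinom, prod_range_succ, Nat.factorial_succ, Nat.cast_mul, Nat.cast_succ]
  field_simp

theorem genBinom_succ_succ (R : ℝ) (k : ℕ) :
    genBinom (R + 1) (k + 1) = genBinom R k + genBinom R (k + 1) := by
  have hshift : ∏ i ∈ range (k + 1), (R + 1 - i) = (∏ i ∈ range k, (R - i)) * (R + 1) := by
    rw [prod_range_succ']
    push_cast
    simp only [add_sub_add_right_eq_sub, sub_zero]
  rw [genBinom, genBinom, genBinom, hshift, prod_range_succ, Nat.factorial_succ, Nat.cast_mul,
    Nat.cast_succ]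
  field_simp
  ring

theorem sum_range_neg_one_pow_mul_genBinom (R : ℝ) (N : ℕ) :
    ∑ k ∈ range (N + 1), (-1) ^ k * genBinom R k = (-1) ^ N * genBinom (R - 1) N := by
  induction N with
  | zero => simp [genBinom_zero]
  | succ N ih =>
    have hpascal := genBinom_succ_succ (R - 1) N
    rw [sub_add_cancel] at hpascal
    rw [sum_range_succ, ih, hpascal, pow_succ]
    ring

theorem sum_range_neg_one_pow_mul_genBinom_mul_linear (R x : ℝ) (N : ℕ) :
    ∑ k ∈ range (N + 1 + 1), (-1) ^ k * genBinom R k * (x - k * (x / (N + 1 : ℕ))) =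
      x / (N + 1 : ℕ) * ((-1) ^ N * genBinom (R - 2) N) := by
  have hx : x = (N + 1 : ℕ) * (x / (N + 1 : ℕ)) := by field_simp
  calc ∑ k ∈ range (N + 1 + 1), (-1) ^ k * genBinom R k * (x - k * (x / (N + 1 : ℕ)))
      = x / (N + 1 : ℕ) *
          ∑ k ∈ range (N + 1 + 1), (-1) ^ k * genBinom R k * ((N + 1 : ℕ) - k : ℝ) := by
        rw [mul_sum]
        refine sum_congr rfl fun k _ => ?_
        nth_rewrite 1 [hx]
        ring
    _ = x / (N + 1 : ℕ) * ((-1) ^ N * genBinom (R - 2) N) := by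
        rw [sum_range_mul_sub_eq_sum_partial_sums]
        simp only [sum_range_neg_one_pow_mul_genBinom]
        rw [sub_sub]
        norm_num

theorem centralBinom_succ_div_four_pow (n : ℕ) :
    (centralBinom (n + 1) : ℝ) / 4 ^ (n + 1) =
      centralBinom n / 4 ^ n * (2 * n + 1) / (2 * n + 2) := by
  have hrec : ((n : ℝ) + 1) * centralBinom (n + 1) = 2 * (2 * n + 1) * centralBinom n := by
    exact_mod_cast Nat.succ_mul_centralBinom_succ n
  rw [eq_div_iff (by positivity), div_mul_eq_mul_div, div_mul_eq_mul_div, pow_succ]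
  field_simp
  linear_combination 2 * hrec

theorem neg_one_pow_mul_genBinom_neg_three_halves (n : ℕ) :
    (-1) ^ n * genBinom (-3 / 2) n = 2 * (n + 1) * (centralBinom (n + 1) / 4 ^ (n + 1)) := by
  induction n with
  | zero => norm_num [genBinom_zero, centralBinom, Nat.choose]
  | succ n ih =>
    rw [genBinom_succ, pow_succ, centralBinom_succ_div_four_pow (n + 1)]
    calc (-1) ^ n * (-1) * (genBinom (-3 / 2) n * (-3 / 2 - n) / (n + 1))
        = (-1) ^ n * genBinom (-3 / 2) n * (2 * n + 3) / (2 * (n + 1)) := by field_simp; ring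
      _ = _ := by rw [ih]; push_cast; field_simp; ring

theorem Real.Wallis.W_eq_inv_centralBinom (n : ℕ) :
    Wallis.W n = ((2 * n + 1) * ((centralBinom n : ℝ) / 4 ^ n) ^ 2)⁻¹ := by
  induction n with
  | zero => simp [Wallis.W]
  | succ n ih =>
    rw [Wallis.W_succ, ih, centralBinom_succ_div_four_pow]
    have : (centralBinom n : ℝ) ≠ 0 := mod_cast Nat.centralBinom_ne_zero n
    push_cast
    field_simp
    ring

theorem tendsto_sqrt_mul_centralBinom_div_four_pow :
    Tendsto (fun n : ℕ => √n * ((centralBinom n : ℝ) / 4 ^ n)) atTop (𝓝 (√π)⁻¹) := by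
  have hW : Tendsto (fun n : ℕ => (2 * n + 1) * ((centralBinom n : ℝ) / 4 ^ n) ^ 2) atTop
      (𝓝 (π / 2)⁻¹) := by
    simpa only [Wallis.W_eq_inv_centralBinom, inv_inv] using
      Wallis.tendsto_W_nhds_pi_div_two.inv₀ (by positivity)
  have hsq :
      Tendsto (fun n : ℕ => n * ((centralBinom n : ℝ) / 4 ^ n) ^ 2) atTop (𝓝 π⁻¹) := by
    have := Stirling.tendsto_self_div_two_mul_self_add_one.mul hW
    rw [show (1 / 2 : ℝ) * (π / 2)⁻¹ = π⁻¹ by field_simp] at this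
    refine this.congr fun n => ?_
    field_simp
  rw [← sqrt_inv]
  refine hsq.sqrt.congr fun n => ?_
  rw [sqrt_mul (Nat.cast_nonneg n), sqrt_sq (by positivity)]

/-- The Grünwald–Letnikov half-derivative of f(x) = x along the coupled limit h = x/N
    converges to the Riemann–Liouville value (2/√π)√x, for x > 0. -/
theorem half_derivative_linear_principal_value (x : ℝ) (hx : 0 < x) :
    Filter.Tendsto
      (fun N : ℕ =>
        (x / N) ^ (-(1/2) : ℝ) *
          ∑ k ∈ Finset.range (N + 1),
            (-1 : ℝ) ^ k * genBinom (1/2) k * (x - k * (x / N)))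
      Filter.atTop (nhds (2 / Real.sqrt Real.pi * Real.sqrt x)) := by
  have hterm : ∀ n : ℕ,
      (x / (n + 1 : ℕ)) ^ (-(1/2) : ℝ) * ∑ k ∈ range (n + 1 + 1),
          (-1 : ℝ) ^ k * genBinom (1/2) k * (x - k * (x / (n + 1 : ℕ))) =
        2 * √x * (√(n + 1 : ℕ) * ((centralBinom (n + 1) : ℝ) / 4 ^ (n + 1))) := by
    intro n
    have hrpow : (x / (n + 1 : ℕ)) ^ (-(1/2) : ℝ) = √(n + 1 : ℕ) / √x := by
      rw [rpow_neg (by positivity), ← sqrt_eq_rpow, sqrt_div hx.le, inv_div]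
    rw [sum_range_neg_one_pow_mul_genBinom_mul_linear, show (1/2 : ℝ) - 2 = -3/2 by norm_num,
      neg_one_pow_mul_genBinom_neg_three_halves, hrpow]
    field_simp
    push_cast
    rw [sq_sqrt hx.le]
  rw [← tendsto_add_atTop_iff_nat 1]
  convert (tendsto_sqrt_mul_centralBinom_div_four_pow.comp (tendsto_add_atTop_nat 1)).const_mul
    (2 * √x) using 1
  · exact funext hterm
  · rw [div_eq_mul_inv, mul_right_comm]
end

section
/- For every natural number m and every non-integer real number R, q = 1 satisfies the characteristic equation of D^R x^m; equivalently, the Gamma-function identity (1/R) · Γ(m+1) Γ(1-R) / Γ(m-R+1) = (π/sin(πR)) · Γ(m+1)/(Γ(R+1) Γ(m-R+1)) holds, so that ∑_{j=0}^{m} C(m,j)(-1)^j/(R-j) = (π/sin(πR)) · Γ(m+1)/(Γ(R+1) Γ(m-R+1)). -/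
open Finset Real

private lemma gamma_add_nat (x : ℝ) (n : ℕ) (hx : ∀ k : ℕ, x + k ≠ 0) :
    Real.Gamma (x + n) = Real.Gamma x * ∏ k ∈ Finset.range n, (x + k) := by
  induction n with
  | zero => simp
  | succ n ih =>
      have h : x + (n + 1 : ℕ) = (x + n) + 1 := by push_cast; ring
      rw [h, Real.Gamma_add_one (hx n), ih, Finset.prod_range_succ]
      ring

private lemma key_sum (m : ℕ) : ∀ R : ℝ, (∀ n : ℤ, R ≠ (n : ℝ)) →
    ∑ j ∈ Finset.range (m + 1), (m.choose j : ℝ) * (-1 : ℝ) ^ j / (R - j)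
      = (m.factorial : ℝ) / (R * ∏ k ∈ Finset.range m, ((k : ℝ) + 1 - R)) := by
  induction m with
  | zero => intro R hR; simp
  | succ m ih =>
      intro R hR
      have hR' : ∀ n : ℤ, R - 1 ≠ (n : ℝ) := by
        intro n h
        exact hR (n + 1) (by push_cast; linarith)
      have hfac : ∀ k : ℕ, (k : ℝ) + 1 - R ≠ 0 := by
        intro k h
        exact hR (k + 1) (by push_cast; linarith)
      have hR0 : R ≠ 0 := by simpa using hR 0
      have hP : ∀ n : ℕ, (∏ k ∈ Finset.range n, ((k : ℝ) + 1 - R)) ≠ 0 := by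
        intro n
        exact Finset.prod_ne_zero_iff.2 fun k _ => hfac k
      -- recurrence
      have hrec : ∑ j ∈ Finset.range (m + 1 + 1), ((m + 1).choose j : ℝ) * (-1 : ℝ) ^ j / (R - j)
          = (∑ j ∈ Finset.range (m + 1), (m.choose j : ℝ) * (-1 : ℝ) ^ j / (R - j))
            - ∑ j ∈ Finset.range (m + 1), (m.choose j : ℝ) * (-1 : ℝ) ^ j / ((R - 1) - j) := by
        rw [Finset.sum_range_succ' (fun j => ((m + 1).choose j : ℝ) * (-1 : ℝ) ^ j / (R - j)) (m + 1)]
        have hsplit : ∀ j ∈ Finset.range (m + 1),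
            (((m + 1).choose (j + 1) : ℝ) * (-1 : ℝ) ^ (j + 1) / (R - (j + 1 : ℕ)))
              = (m.choose (j + 1) : ℝ) * (-1 : ℝ) ^ (j + 1) / (R - ((j + 1 : ℕ) : ℝ))
                - (m.choose j : ℝ) * (-1 : ℝ) ^ j / ((R - 1) - j) := by
          intro j _
          rw [Nat.choose_succ_succ]
          push_cast
          have h1 : R - ((j : ℝ) + 1) ≠ 0 := by
            intro h; exact hR (j + 1) (by push_cast; linarith)
          have h2 : (R - 1) - (j : ℝ) = R - ((j : ℝ) + 1) := by ring
          rw [h2]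
          field_simp
          ring
        rw [Finset.sum_congr rfl hsplit, Finset.sum_sub_distrib]
        have hext : ∑ j ∈ Finset.range (m + 1),
            (m.choose (j + 1) : ℝ) * (-1 : ℝ) ^ (j + 1) / (R - ((j + 1 : ℕ) : ℝ))
              + ((m + 1).choose 0 : ℝ) * (-1 : ℝ) ^ 0 / (R - (0 : ℕ))
            = ∑ j ∈ Finset.range (m + 1), (m.choose j : ℝ) * (-1 : ℝ) ^ j / (R - j) := by
          have h := Finset.sum_range_succ' (fun j => (m.choose j : ℝ) * (-1 : ℝ) ^ j / (R - j)) (m + 1)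
          rw [Finset.sum_range_succ] at h
          simp only [Nat.choose_succ_self, Nat.cast_zero, zero_mul, zero_div, add_zero] at h
          rw [h]
          norm_num
        linarith [hext]
      rw [hrec, ih R hR, ih (R - 1) hR']
      -- product relations
      have hprod1 : ∏ k ∈ Finset.range (m + 1), ((k : ℝ) + 1 - R)
          = (∏ k ∈ Finset.range m, ((k : ℝ) + 1 - R)) * ((m : ℝ) + 1 - R) :=
        Finset.prod_range_succ _ _
      have hprod2 : (1 - R) * ∏ k ∈ Finset.range m, ((k : ℝ) + 1 - (R - 1))
          = ∏ k ∈ Finset.range (m + 1), ((k : ℝ) + 1 - R) := by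
        have hc : ∏ k ∈ Finset.range m, ((k : ℝ) + 1 - (R - 1))
            = ∏ k ∈ Finset.range m, (((k + 1 : ℕ) : ℝ) + 1 - R) :=
          Finset.prod_congr rfl fun k _ => by push_cast; ring
        rw [hc, Finset.prod_range_succ' (fun k => ((k : ℝ) + 1 - R)) m]
        push_cast
        ring
      rw [hprod1] at hprod2
      have hRQ : (R - 1) * (∏ k ∈ Finset.range m, ((k : ℝ) + 1 - (R - 1)))
          = -((∏ k ∈ Finset.range m, ((k : ℝ) + 1 - R)) * ((m : ℝ) + 1 - R)) := by
        nlinarith [hprod2]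
      rw [hprod1, Nat.factorial_succ]
      rw [hRQ]
      have hPm := hP m
      have hmR : (m : ℝ) + 1 - R ≠ 0 := hfac m
      push_cast
      field_simp
      ring

/-- q = 1 satisfies the characteristic equation of D^R x^m: the Gamma identity
    (1/R) Γ(m+1)Γ(1-R)/Γ(m-R+1) = (π/sin(πR)) Γ(m+1)/(Γ(R+1)Γ(m-R+1)) holds, and hence
    ∑_{j=0}^{m} C(m,j)(-1)^j/(R-j) = (π/sin(πR)) Γ(m+1)/(Γ(R+1)Γ(m-R+1)). -/
theorem char_eq_at_one (m : ℕ) (R : ℝ) (hR : ∀ n : ℤ, R ≠ (n : ℝ)) :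
    (1 / R) * (Real.Gamma ((m : ℝ) + 1) * Real.Gamma (1 - R) / Real.Gamma ((m : ℝ) - R + 1))
        = Real.pi / Real.sin (Real.pi * R)
          * (Real.Gamma ((m : ℝ) + 1) / (Real.Gamma (R + 1) * Real.Gamma ((m : ℝ) - R + 1)))
      ∧ ∑ j ∈ Finset.range (m + 1), (m.choose j : ℝ) * (-1 : ℝ) ^ j / (R - j)
        = Real.pi / Real.sin (Real.pi * R)
          * (Real.Gamma ((m : ℝ) + 1) / (Real.Gamma (R + 1) * Real.Gamma ((m : ℝ) - R + 1))) := by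
  have hR0 : R ≠ 0 := by simpa using hR 0
  have hGR : Real.Gamma R ≠ 0 := by
    apply Real.Gamma_ne_zero
    intro n h
    exact hR (-n) (by push_cast; linarith)
  have hG1R : Real.Gamma (1 - R) ≠ 0 := by
    apply Real.Gamma_ne_zero
    intro n h
    exact hR (1 + n) (by push_cast; linarith)
  have hfac : ∀ k : ℕ, (1 - R) + (k : ℝ) ≠ 0 := by
    intro k h
    exact hR (1 + k) (by push_cast; linarith)
  have hGam : Real.Gamma ((m : ℝ) - R + 1)
      = Real.Gamma (1 - R) * ∏ k ∈ Finset.range m, ((k : ℝ) + 1 - R) := by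
    have h : (m : ℝ) - R + 1 = (1 - R) + (m : ℕ) := by ring
    rw [h, gamma_add_nat _ _ hfac]
    congr 1
    exact Finset.prod_congr rfl fun k _ => by ring
  have hGm : Real.Gamma ((m : ℝ) + 1) = (m.factorial : ℝ) := Real.Gamma_nat_eq_factorial m
  have hrefl : Real.pi / Real.sin (Real.pi * R) = Real.Gamma R * Real.Gamma (1 - R) :=
    (Real.Gamma_mul_Gamma_one_sub R).symm
  have hGR1 : Real.Gamma (R + 1) = R * Real.Gamma R := Real.Gamma_add_one hR0
  have hPm : (∏ k ∈ Finset.range m, ((k : ℝ) + 1 - R)) ≠ 0 := by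
    apply Finset.prod_ne_zero_iff.2
    intro k _ h
    exact hR (k + 1) (by push_cast; linarith)
  constructor
  · rw [hGam, hGm, hrefl, hGR1]
    field_simp
  · rw [key_sum m R hR, hGam, hGm, hrefl, hGR1]
    field_simp
end

section
/- Let R be a non-integer real number with R > 0, let p be a polynomial with real coefficients, p(t) = ∑_{m=0}^{d} a_m t^m, and let x > 0 be real. Then, along the coupled sequence h = x/N, the Grünwald–Letnikov derivative of order R of p recovers the Riemann–Liouville derivative of p: lim_{N→∞} (x/N)^{-R} ∑_{k=0}^{N} (-1)^k C(R,k) p(x - k·x/N) = ∑_{m=0}^{d} a_m · Γ(m+1)/Γ(m-R+1) · x^{m-R}. -/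
/-!
Since `x - k x/N = (x/N)(N - k)`, the claim reduces to the monomials: for every polynomial `q` of
degree at most `m`, `N^(R-m) ∑_{k ≤ N} (-1)^k C(R,k) q(N - k) → q_m · m!/Γ(m-R+1)`. In the basis
`m! C(y + m, m)` the sum is a Chu–Vandermonde convolution, equal to `m! (-1)^N C(R-m-1, N)`, and
Euler's limit formula for `Γ` gives `(-1)^N C(S, N) ~ N^(-S-1)/Γ(-S)`. The remaining terms have lower
degree and, by induction, contribute `o(N^(m-R))`.
-/

open Finset Filter Real

open Polynomial Topology
open scoped Nat

lemma genBinom_eq_choose (r : ℝ) (k : ℕ) : genBinom r k = Ring.choose r k := by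
  rw [Ring.choose_eq_smul, genBinom, ← descPochhammer_eval_eq_prod_range, smul_eq_mul,
    ← aeval_eq_smeval, aeval_def, eval₂_eq_eval_map, descPochhammer_map, div_eq_inv_mul]

lemma choose_neg_natCast_add_one (m j : ℕ) :
    Ring.choose (-((m : ℝ) + 1)) j = (-1) ^ j * ((j + m).choose m : ℝ) := by
  rw [Ring.choose_neg, Units.smul_def, zsmul_eq_mul,
    show (m : ℝ) + 1 + j - 1 = ((j + m : ℕ) : ℝ) by push_cast; ring, Ring.choose_natCast,
    Nat.choose_symm_add]
  simp [Int.negOnePow]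

/-- The coefficient of `t^N` in `(1 - t)^R (1 - t)^(-(m+1)) = (1 - t)^(R-m-1)`. -/
theorem sum_neg_one_pow_mul_genBinom_mul_choose (R : ℝ) (m N : ℕ) :
    ∑ k ∈ range (N + 1), (-1) ^ k * genBinom R k * ((N - k + m).choose m : ℝ) =
      (-1) ^ N * genBinom (R - m - 1) N := by
  rw [genBinom_eq_choose, show R - m - 1 = R + -((m : ℝ) + 1) by ring,
    Ring.add_choose_eq _ (Commute.all _ _),
    Nat.sum_antidiagonal_eq_sum_range_succ fun i j => Ring.choose R i * Ring.choose _ j, mul_sum]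
  refine sum_congr rfl fun k hk => ?_
  have hsign : (-1 : ℝ) ^ N * (-1) ^ (N - k) = (-1) ^ k := by
    rw [← pow_add, show N + (N - k) = k + 2 * (N - k) by grind, pow_add, pow_mul]
    simp
  rw [genBinom_eq_choose, choose_neg_natCast_add_one, ← hsign]
  ring

/-- For `S ∈ ℕ` the left side is eventually `0`, matching Mathlib's convention `Γ(-n) = 0`. -/
theorem tendsto_rpow_mul_neg_one_pow_mul_genBinom (S : ℝ) :
    Tendsto (fun N : ℕ => (N : ℝ) ^ (S + 1) * ((-1) ^ N * genBinom S N)) atTop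
      (𝓝 (Gamma (-S))⁻¹) := by
  by_cases hS : ∃ n : ℕ, S = n
  · obtain ⟨n, rfl⟩ := hS
    rw [Gamma_neg_nat_eq_zero, inv_zero]
    refine tendsto_const_nhds.congr' ?_
    filter_upwards [eventually_gt_atTop n] with N hN
    rw [genBinom, prod_eq_zero (mem_range.mpr hN) (sub_self _)]
    simp
  push Not at hS
  have hpole (j : ℕ) : -S + j ≠ 0 := fun h => hS j (by linarith)
  have hGamma : Gamma (-S) ≠ 0 := Gamma_ne_zero fun j h => hpole j (by rw [h]; ring)
  have hlim := (tendsto_natCast_div_add_atTop (-S)).div (GammaSeq_tendsto_Gamma (-S)) hGamma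
  rw [one_div] at hlim
  refine hlim.congr' ?_
  filter_upwards [eventually_gt_atTop 0] with N hN
  have hN : (0 : ℝ) < N := Nat.cast_pos.mpr hN
  have hsign : (-1 : ℝ) ^ N * ∏ i ∈ range N, (S - i) = ∏ i ∈ range N, (-S + i) := by
    rw [show (-1 : ℝ) ^ N = ∏ _i ∈ range N, (-1 : ℝ) by simp, ← prod_mul_distrib]
    exact prod_congr rfl fun i _ => by ring
  have hprod : ∏ i ∈ range N, (-S + i) ≠ 0 := prod_ne_zero_iff.mpr fun j _ => hpole j
  have hNS : (N : ℝ) + -S ≠ 0 := by rw [add_comm]; exact hpole N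
  have hpow : (N : ℝ) ^ S ≠ 0 := (rpow_pos_of_pos hN S).ne'
  simp only [Pi.div_apply, GammaSeq]
  rw [prod_range_succ, genBinom, mul_div_assoc', hsign, rpow_add hN, rpow_one, rpow_neg hN.le]
  field_simp
  ring

lemma tendsto_natCast_rpow_mul_of_lt {f : ℕ → ℝ} {a b L : ℝ} (hab : a < b)
    (hf : Tendsto (fun N : ℕ => (N : ℝ) ^ b * f N) atTop (𝓝 L)) :
    Tendsto (fun N : ℕ => (N : ℝ) ^ a * f N) atTop (𝓝 0) := by
  have hdecay : Tendsto (fun N : ℕ => (N : ℝ) ^ (-(b - a))) atTop (𝓝 0) :=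
    (tendsto_rpow_neg_atTop (sub_pos.mpr hab)).comp tendsto_natCast_atTop_atTop
  simpa using (hdecay.mul hf).congr' <| by
    filter_upwards [eventually_gt_atTop 0] with N hN
    rw [← mul_assoc, ← rpow_add (Nat.cast_pos.mpr hN)]
    ring_nf

noncomputable def grunwaldSum (R : ℝ) (N : ℕ) : ℝ[X] →ₗ[ℝ] ℝ :=
  ∑ k ∈ range (N + 1), ((-1) ^ k * genBinom R k) • leval ((N : ℝ) - k)

lemma grunwaldSum_apply (R : ℝ) (N : ℕ) (q : ℝ[X]) :
    grunwaldSum R N q = ∑ k ∈ range (N + 1), (-1) ^ k * genBinom R k * q.eval ((N : ℝ) - k) := by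
  simp [grunwaldSum]

/-- `(X + 1) ⋯ (X + m) = m! · C(X + m, m)`. -/
noncomputable def chooseAddPoly (m : ℕ) : ℝ[X] := (descPochhammer ℝ m).comp (X + C (m : ℝ))

lemma natDegree_chooseAddPoly (m : ℕ) : (chooseAddPoly m).natDegree = m := by
  rw [chooseAddPoly, natDegree_comp, descPochhammer_natDegree, natDegree_X_add_C, mul_one]

lemma coeff_chooseAddPoly_self (m : ℕ) : (chooseAddPoly m).coeff m = 1 := by
  have h : (chooseAddPoly m).leadingCoeff = 1 := (monic_descPochhammer ℝ m).comp_X_add_C _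
  rwa [leadingCoeff, natDegree_chooseAddPoly] at h

lemma eval_natCast_chooseAddPoly (m j : ℕ) :
    (chooseAddPoly m).eval (j : ℝ) = m ! * ((j + m).choose m : ℝ) := by
  rw [chooseAddPoly, eval_comp, eval_add, eval_X, eval_C, ← Nat.cast_add,
    descPochhammer_eval_eq_descFactorial, Nat.descFactorial_eq_factorial_mul_choose, Nat.cast_mul]

theorem grunwaldSum_chooseAddPoly (R : ℝ) (m N : ℕ) :
    grunwaldSum R N (chooseAddPoly m) = m ! * ((-1) ^ N * genBinom (R - m - 1) N) := by
  rw [grunwaldSum_apply, ← sum_neg_one_pow_mul_genBinom_mul_choose, mul_sum]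
  refine sum_congr rfl fun k hk => ?_
  rw [← Nat.cast_sub (mem_range_succ_iff.mp hk), eval_natCast_chooseAddPoly]
  ring

theorem tendsto_rpow_mul_grunwaldSum_chooseAddPoly (R : ℝ) (m : ℕ) :
    Tendsto (fun N : ℕ => (N : ℝ) ^ (R - m) * grunwaldSum R N (chooseAddPoly m)) atTop
      (𝓝 (m ! / Gamma (m - R + 1))) := by
  have h := (tendsto_rpow_mul_neg_one_pow_mul_genBinom (R - m - 1)).const_mul (m ! : ℝ)
  rw [show -(R - m - 1) = (m : ℝ) - R + 1 by ring, ← div_eq_mul_inv] at h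
  refine h.congr fun N => ?_
  rw [grunwaldSum_chooseAddPoly, show R - m - 1 + 1 = R - m by ring]
  ring

theorem tendsto_rpow_mul_grunwaldSum (R : ℝ) (m : ℕ) (q : ℝ[X]) (hq : q.natDegree ≤ m) :
    Tendsto (fun N : ℕ => (N : ℝ) ^ (R - m) * grunwaldSum R N q) atTop
      (𝓝 (q.coeff m * (m ! / Gamma (m - R + 1)))) := by
  induction m using Nat.strong_induction_on generalizing q with
  | _ m ih =>
  set r := q - q.coeff m • chooseAddPoly m with hr
  have hrest : Tendsto (fun N : ℕ => (N : ℝ) ^ (R - m) * grunwaldSum R N r) atTop (𝓝 0) := by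
    obtain hr0 | hr0 := eq_or_ne r 0
    · simp [hr0]
    have hcoeff : r.coeff m = 0 := by
      rw [hr, coeff_sub, coeff_smul, coeff_chooseAddPoly_self, smul_eq_mul, mul_one, sub_self]
    have hdeg : r.natDegree < m := by
      refine lt_of_le_of_ne ((natDegree_sub_le_of_le hq ?_).trans (max_self m).le) fun h => hr0 ?_
      · exact (natDegree_smul_le _ _).trans (natDegree_chooseAddPoly m).le
      · rwa [← leadingCoeff_eq_zero, leadingCoeff, h]
    exact tendsto_natCast_rpow_mul_of_lt (by simpa using hdeg) (ih _ hdeg r le_rfl)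
  have h := ((tendsto_rpow_mul_grunwaldSum_chooseAddPoly R m).const_mul (q.coeff m)).add hrest
  rw [add_zero] at h
  refine h.congr fun N => ?_
  rw [hr, map_sub, map_smul, smul_eq_mul]
  ring

lemma rpow_neg_mul_sum_eq_sum_grunwaldSum (R : ℝ) {x : ℝ} (hx : 0 < x) {N : ℕ} (hN : 0 < N)
    (d : ℕ) (a : ℕ → ℝ) :
    (x / N) ^ (-R) * ∑ k ∈ range (N + 1), (-1) ^ k * genBinom R k *
        ∑ m ∈ range (d + 1), a m * (x - k * (x / N)) ^ m =
      ∑ m ∈ range (d + 1),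
        a m * x ^ ((m : ℝ) - R) * ((N : ℝ) ^ (R - m) * grunwaldSum R N (X ^ m)) := by
  have hN : (0 : ℝ) < N := Nat.cast_pos.mpr hN
  have hscale (m : ℕ) : (x / N) ^ (-R) * (x / N) ^ m = x ^ ((m : ℝ) - R) * (N : ℝ) ^ (R - m) := by
    rw [← rpow_natCast, ← rpow_add (div_pos hx hN), div_rpow hx.le hN.le, div_eq_mul_inv,
      ← rpow_neg hN.le, neg_add_eq_sub, neg_sub]
  simp only [grunwaldSum_apply, eval_pow, eval_X, mul_sum]
  rw [sum_comm]
  refine sum_congr rfl fun m _ => sum_congr rfl fun k _ => ?_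
  rw [show x - k * (x / N) = x / N * (N - k) by field_simp, mul_pow]
  linear_combination (-1) ^ k * genBinom R k * a m * ((N : ℝ) - k) ^ m * hscale m

theorem coupled_GL_polynomial_principal_value_general (R : ℝ) (d : ℕ) (a : ℕ → ℝ) (x : ℝ) (hx : 0 < x) :
    Filter.Tendsto
      (fun N : ℕ =>
        (x / N) ^ (-R) *
          ∑ k ∈ Finset.range (N + 1),
            (-1 : ℝ) ^ k * genBinom R k *
              ∑ m ∈ Finset.range (d + 1), a m * (x - k * (x / N)) ^ m)
      Filter.atTop
      (nhds (∑ m ∈ Finset.range (d + 1),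
        a m * (Real.Gamma ((m : ℝ) + 1) / Real.Gamma ((m : ℝ) - R + 1)) * x ^ ((m : ℝ) - R))) := by
  have hmonomial (m : ℕ) : Tendsto (fun N : ℕ => (N : ℝ) ^ (R - m) * grunwaldSum R N (X ^ m))
      atTop (𝓝 (Gamma (m + 1) / Gamma (m - R + 1))) := by
    simpa [Gamma_nat_eq_factorial] using
      tendsto_rpow_mul_grunwaldSum R m (X ^ m) (natDegree_X_pow_le m)
  simp_rw [mul_right_comm (a _) (_ / _)]
  refine (tendsto_finsetSum _ fun m _ =>
    (hmonomial m).const_mul (a m * x ^ ((m : ℝ) - R))).congr' ?_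
  filter_upwards [eventually_gt_atTop 0] with N hN
  exact (rpow_neg_mul_sum_eq_sum_grunwaldSum R hx hN d a).symm

/-- For non-integer R > 0, a real polynomial p(t) = ∑_{m=0}^{d} a_m t^m, and x > 0,
    the Grünwald–Letnikov derivative of order R of p along the coupled sequence
    h = x/N recovers the Riemann–Liouville derivative
    ∑_{m=0}^{d} a_m Γ(m+1)/Γ(m-R+1) · x^{m-R}. -/
theorem coupled_GL_polynomial_principal_value (R : ℝ) (hR : ∀ n : ℤ, R ≠ (n : ℝ))
    (hR0 : 0 < R) (d : ℕ) (a : ℕ → ℝ) (x : ℝ) (hx : 0 < x) :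
    Filter.Tendsto
      (fun N : ℕ =>
        (x / N) ^ (-R) *
          ∑ k ∈ Finset.range (N + 1),
            (-1 : ℝ) ^ k * genBinom R k *
              ∑ m ∈ Finset.range (d + 1), a m * (x - k * (x / N)) ^ m)
      Filter.atTop
      (nhds (∑ m ∈ Finset.range (d + 1),
        a m * (Real.Gamma ((m : ℝ) + 1) / Real.Gamma ((m : ℝ) - R + 1)) * x ^ ((m : ℝ) - R))) :=
  coupled_GL_polynomial_principal_value_general R d a x hx
end
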